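/- arXiv:math/0502585 — 8 statements merged into one kernel-verified Lean document; each statement's English description precedes it below -/
import Mathlib

section
/- For the rotation matrix A_θ = [[cos θ, -sin θ],[sin θ, cos θ]] and the shear U_t = [[1, t],[0, 1]], the absolute value of the trace of the commutator [A_θ, U_t A_θ U_t⁻¹] equals 2 + (4t² + t⁴) sin⁴θ. -/
open Real Matrix

noncomputable def Arot (θ : ℝ) : Matrix (Fin 2) (Fin 2) ℝ :=
  !![Real.cos θ, -Real.sin θ; Real.sin θ, Real.cos θ]

def Ushear (t : ℝ) : Matrix (Fin 2) (Fin 2) ℝ := !![1, t; 0, 1]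

lemma Arot_inv (θ : ℝ) : (Arot θ)⁻¹ = !![Real.cos θ, Real.sin θ; -Real.sin θ, Real.cos θ] := by
  apply Matrix.inv_eq_left_inv
  ext i j
  fin_cases i <;> fin_cases j <;>
    simp [Arot, Matrix.mul_apply, Fin.sum_univ_two] <;> nlinarith [Real.sin_sq_add_cos_sq θ]

lemma Ushear_inv (t : ℝ) : (Ushear t)⁻¹ = !![1, -t; 0, 1] := by
  apply Matrix.inv_eq_left_inv
  ext i j
  fin_cases i <;> fin_cases j <;>
    simp [Ushear, Matrix.mul_apply, Fin.sum_univ_two]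

lemma conjUA_inv (θ t : ℝ) :
    (Ushear t * Arot θ * (Ushear t)⁻¹)⁻¹ = Ushear t * (Arot θ)⁻¹ * (Ushear t)⁻¹ := by
  rw [Matrix.mul_inv_rev, Matrix.mul_inv_rev,
    Matrix.nonsing_inv_nonsing_inv _ (by simp [Ushear, Matrix.det_fin_two_of]), mul_assoc]

theorem trace_commutator_rot_shear (θ t : ℝ) :
    |Matrix.trace (Arot θ * (Ushear t * Arot θ * (Ushear t)⁻¹) * (Arot θ)⁻¹ *
        (Ushear t * Arot θ * (Ushear t)⁻¹)⁻¹)| =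
      2 + (4 * t ^ 2 + t ^ 4) * (Real.sin θ) ^ 4 := by
  have hs := Real.sin_sq_add_cos_sq θ
  rw [conjUA_inv, Arot_inv, Ushear_inv]
  have : Matrix.trace (Arot θ * (Ushear t * Arot θ * !![1, -t; 0, 1]) *
      !![Real.cos θ, Real.sin θ; -Real.sin θ, Real.cos θ] *
      (Ushear t * !![Real.cos θ, Real.sin θ; -Real.sin θ, Real.cos θ] * !![1, -t; 0, 1])) =
      2 + (4 * t ^ 2 + t ^ 4) * (Real.sin θ) ^ 4 := by
    simp [Arot, Ushear, Matrix.trace_fin_two, Matrix.mul_apply, Fin.sum_univ_two]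
    nlinarith [Real.sin_sq_add_cos_sq θ, sq_nonneg (Real.sin θ), sq_nonneg (Real.cos θ)]
  rw [this, abs_of_nonneg]
  positivity
end

section
/- Every real number s with s ≥ 2 arises as the absolute value of the trace of the commutator [A_θ, U_t A_θ U_t⁻¹] for appropriate θ, t ∈ ℝ, where A_θ is a rotation matrix and U_t a shear. -/
open Real Matrix

theorem surj_trace_commutator_rot_shear (s : ℝ) (hs : 2 ≤ s) :
    ∃ θ t : ℝ,
      |Matrix.trace (Arot θ * (Ushear t * Arot θ * (Ushear t)⁻¹) * (Arot θ)⁻¹ *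
          (Ushear t * Arot θ * (Ushear t)⁻¹)⁻¹)| = s := by
  have h4 : Real.sqrt (s + 2) ≥ 2 := by
    have : Real.sqrt 4 ≤ Real.sqrt (s + 2) := Real.sqrt_le_sqrt (by linarith)
    have h4' : Real.sqrt 4 = 2 := by
      rw [show (4 : ℝ) = 2 ^ 2 by norm_num, Real.sqrt_sq (by norm_num)]
    linarith
  refine ⟨Real.pi / 2, Real.sqrt (Real.sqrt (s + 2) - 2), ?_⟩
  set t := Real.sqrt (Real.sqrt (s + 2) - 2) with htdef
  have ht2 : t ^ 2 = Real.sqrt (s + 2) - 2 := Real.sq_sqrt (by linarith)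
  have hs2 : (Real.sqrt (s + 2)) ^ 2 = s + 2 := Real.sq_sqrt (by linarith)
  have key : Matrix.trace (Arot (Real.pi / 2) *
      (Ushear t * Arot (Real.pi / 2) * (Ushear t)⁻¹) * (Arot (Real.pi / 2))⁻¹ *
      (Ushear t * Arot (Real.pi / 2) * (Ushear t)⁻¹)⁻¹) = s := by
    simp only [Arot, Ushear, Real.cos_pi_div_two, Real.sin_pi_div_two]
    rw [Matrix.inv_def, Matrix.inv_def, Matrix.inv_def]
    simp only [Matrix.adjugate_fin_two_of, Matrix.det_fin_two_of]
    norm_num [Matrix.mul_fin_two, Matrix.trace_fin_two_of, Matrix.smul_of,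
      Matrix.smul_cons, Matrix.smul_empty, smul_eq_mul]
    ring_nf
    nlinarith [ht2, hs2, Real.sqrt_nonneg (s + 2)]
  rw [key, abs_of_nonneg (by linarith)]
end

section
/- Let A = [[cos θ, -sin θ],[sin θ, cos θ]] with sin θ ≠ 0, and let B : ℝ → SL(2,ℝ) be a one-parameter subgroup with B(1) elliptic (|trace B(1)| < 2) and B nonconstant. Then the function t ↦ trace(A · B(t)) has nonzero derivative at t = 0. -/
/-!
If the derivative vanished, then, since `det B ≡ 1` forces `trace D = 0` for `D = B'(0)`,
the formula `trace (A D) = cos θ · trace D + sin θ · (D₀₁ - D₁₀)` would make `D` symmetric.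
A one-parameter subgroup solves `B' = D B`, so `B t = exp (t D)`; hence `N = B (1/2)` is
symmetric with `det N = 1`, and then `trace (B 1) = trace (N²) = ‖N‖²_F ≥ 2 det N = 2`,
contradicting ellipticity.
-/

open Real Matrix

theorem eq_exp_smul_of_hasDerivAt_zero {𝔸 : Type*} [NormedRing 𝔸] [NormedAlgebra ℝ 𝔸]
    [CompleteSpace 𝔸] {B : ℝ → 𝔸} {D : 𝔸} (hhom : ∀ s t, B (s + t) = B s * B t)
    (h0 : B 0 = 1) (hD : HasDerivAt B D 0) (t : ℝ) : B t = NormedSpace.exp (t • D) := by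
  have hB : ∀ u, HasDerivAt B (D * B u) u := fun u => by
    have hshift : HasDerivAt (fun v => B (v - u)) D u :=
      HasDerivAt.comp_sub_const u u (by rwa [sub_self])
    refine (hshift.mul_const (B u)).congr_of_eventuallyEq (.of_forall fun v => ?_)
    simp only [← hhom, sub_add_cancel]
  have hexp : ∀ u, HasDerivAt (fun v : ℝ => NormedSpace.exp ((t - v) • D))
      (-(NormedSpace.exp ((t - u) • D) * D)) u := fun u =>
    ((hasDerivAt_exp_smul_const D (t - u)).scomp u ((hasDerivAt_id u).const_sub t)).congr_deriv
      (by simp)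
  have hconst : ∀ u, HasDerivAt (fun v => NormedSpace.exp ((t - v) • D) * B v) 0 u := fun u =>
    ((hexp u).fun_mul (hB u)).congr_deriv (by noncomm_ring)
  simpa [h0] using (is_const_of_deriv_eq_zero (fun u => (hconst u).differentiableAt)
    (fun u => (hconst u).deriv) t 0)

namespace Matrix

variable {n : Type*} [Fintype n]

theorem hasDerivAt_trace_mul_of_hasDerivAt_apply {A : Matrix n n ℝ} {B : ℝ → Matrix n n ℝ}
    {D : Matrix n n ℝ} {t : ℝ}
    (hB : ∀ i j, HasDerivAt (fun t => B t i j) (D i j) t) :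
    HasDerivAt (fun t => trace (A * B t)) (trace (A * D)) t := by
  simp only [trace, diag, mul_apply]
  exact .fun_sum fun i _ => .fun_sum fun j _ => (hB j i).const_mul (A i j)

theorem trace_eq_zero_of_hasDerivAt_apply_of_det_eq_one {B : ℝ → Matrix (Fin 2) (Fin 2) ℝ}
    {D : Matrix (Fin 2) (Fin 2) ℝ}
    (hdet : ∀ t, (B t).det = 1) (h0 : B 0 = 1)
    (hB : ∀ i j, HasDerivAt (fun t => B t i j) (D i j) 0) : trace D = 0 := by
  have hdet' : HasDerivAt (fun t => (B t).det)
      (D 0 0 * B 0 1 1 + B 0 0 0 * D 1 1 - (D 0 1 * B 0 1 0 + B 0 0 1 * D 1 0)) 0 := by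
    simp only [det_fin_two]
    exact ((hB 0 0).mul (hB 1 1)).sub ((hB 0 1).mul (hB 1 0))
  have := hdet'.unique (by simpa only [hdet] using hasDerivAt_const (0 : ℝ) (1 : ℝ))
  simpa [h0, trace_fin_two] using this

theorem two_mul_det_le_trace_mul_self {N : Matrix (Fin 2) (Fin 2) ℝ} (hN : N.IsSymm) :
    2 * N.det ≤ trace (N * N) := by
  have h10 : N 1 0 = N 0 1 := hN.apply 0 1
  simp only [det_fin_two, trace_fin_two, mul_apply, Fin.sum_univ_two, h10]
  nlinarith [sq_nonneg (N 0 0 - N 1 1), sq_nonneg (N 0 1)]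

section linftyOp

-- Any norm gives the same derivatives; `exp` needs one that makes matrices a normed algebra.
attribute [local instance] Matrix.linftyOpNormedRing Matrix.linftyOpNormedAlgebra

variable [DecidableEq n]

theorem hasDerivAt_of_hasDerivAt_apply {B : ℝ → Matrix n n ℝ} {D : Matrix n n ℝ} {t : ℝ}
    (hB : ∀ i j, HasDerivAt (fun t => B t i j) (D i j) t) : HasDerivAt B D t := by
  have hdecomp : ∀ M : Matrix n n ℝ, ∑ i, ∑ j, M i j • single i j (1 : ℝ) = M := fun M => by
    simp_rw [smul_single, smul_eq_mul, mul_one]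
    exact (matrix_eq_sum_single M).symm
  have hcoord : HasDerivAt (fun t => ∑ i, ∑ j, B t i j • single i j (1 : ℝ))
      (∑ i, ∑ j, D i j • single i j (1 : ℝ)) t :=
    .fun_sum fun i _ => .fun_sum fun j _ => (hB i j).smul_const _
  simpa only [hdecomp] using hcoord

theorem eq_exp_smul_of_hasDerivAt_apply {B : ℝ → Matrix n n ℝ} {D : Matrix n n ℝ}
    (hhom : ∀ s t, B (s + t) = B s * B t) (h0 : B 0 = 1)
    (hB : ∀ i j, HasDerivAt (fun t => B t i j) (D i j) 0) (t : ℝ) :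
    B t = NormedSpace.exp (t • D) :=
  eq_exp_smul_of_hasDerivAt_zero hhom h0 (hasDerivAt_of_hasDerivAt_apply hB) t

end linftyOp

end Matrix

theorem trace_Arot_mul (θ : ℝ) (M : Matrix (Fin 2) (Fin 2) ℝ) :
    trace (Arot θ * M) = cos θ * trace M + sin θ * (M 0 1 - M 1 0) := by
  simp only [Arot, trace_fin_two, mul_apply, Fin.sum_univ_two, of_apply, cons_val',
    cons_val_zero, cons_val_one, cons_val_fin_one, neg_mul]
  ring

theorem isSymm_of_trace_Arot_mul_eq_zero {θ : ℝ} (hθ : sin θ ≠ 0)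
    {M : Matrix (Fin 2) (Fin 2) ℝ} (hM : trace M = 0) (hAM : trace (Arot θ * M) = 0) : M.IsSymm := by
  rw [trace_Arot_mul, hM, mul_zero, zero_add, mul_eq_zero, sub_eq_zero] at hAM
  have h01 : M 0 1 = M 1 0 := hAM.resolve_left hθ
  refine IsSymm.ext fun i j => ?_
  fin_cases i <;> fin_cases j <;> simp [h01]

theorem deriv_trace_nonzero_general
    (θ : ℝ) (hθ : Real.sin θ ≠ 0)
    (B : ℝ → Matrix (Fin 2) (Fin 2) ℝ)
    (hdet : ∀ t, (B t).det = 1)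
    (hhom : ∀ s t, B (s + t) = B s * B t)
    (h0 : B 0 = 1)
    (D : Matrix (Fin 2) (Fin 2) ℝ)
    (hderiv : ∀ i j, HasDerivAt (fun t => B t i j) (D i j) 0)
    (hell : |Matrix.trace (B 1)| < 2) :
    ∀ L : ℝ, HasDerivAt (fun t => Matrix.trace (Arot θ * B t)) L 0 → L ≠ 0 := by
  rintro L hL rfl
  have hD : D.IsSymm := isSymm_of_trace_Arot_mul_eq_zero hθ
    (trace_eq_zero_of_hasDerivAt_apply_of_det_eq_one hdet h0 hderiv)
    ((hasDerivAt_trace_mul_of_hasDerivAt_apply hderiv).unique hL)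
  have hhalf : (B (1 / 2)).IsSymm := by
    rw [eq_exp_smul_of_hasDerivAt_apply hhom h0 hderiv]
    exact (hD.smul _).exp
  have h2 : 2 ≤ trace (B 1) :=
    calc 2 = 2 * (B (1 / 2)).det := by rw [hdet, mul_one]
      _ ≤ trace (B (1 / 2) * B (1 / 2)) := two_mul_det_le_trace_mul_self hhalf
      _ = trace (B 1) := by rw [← hhom]; norm_num
  linarith [(abs_lt.mp hell).2]

theorem deriv_trace_nonzero
    (θ : ℝ) (hθ : Real.sin θ ≠ 0)
    (B : ℝ → Matrix (Fin 2) (Fin 2) ℝ)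
    (hdet : ∀ t, (B t).det = 1)
    (hhom : ∀ s t, B (s + t) = B s * B t)
    (h0 : B 0 = 1)
    (D : Matrix (Fin 2) (Fin 2) ℝ)
    (hderiv : ∀ i j, HasDerivAt (fun t => B t i j) (D i j) 0)
    (hell : |Matrix.trace (B 1)| < 2)
    (hnc : ∃ t, B t ≠ 1) :
    ∀ L : ℝ, HasDerivAt (fun t => Matrix.trace (Arot θ * B t)) L 0 → L ≠ 0 :=
  deriv_trace_nonzero_general θ hθ B hdet hhom h0 D hderiv hell
end

section
/- If g = 0, r = 3, integers k₁, k₂, k₃ ≥ 2, d = lcm(k₁,k₂,k₃), and 0 < d·(1 − 1/k₁ − 1/k₂ − 1/k₃) ≤ K, then d ≤ 42·K. -/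
lemma aux_sorted (a b c : ℕ) (ha : 2 ≤ a) (hab : a ≤ b) (hbc : b ≤ c)
    (h : (1:ℚ)/a + 1/b + 1/c < 1) : (1:ℚ)/a + 1/b + 1/c ≤ 41/42 := by
  have hb : 2 ≤ b := le_trans ha hab
  have hc : 2 ≤ c := le_trans hb hbc
  have ha0 : (0:ℚ) < a := by positivity
  have hb0 : (0:ℚ) < b := by positivity
  have hc0 : (0:ℚ) < c := by positivity
  by_cases ha4 : 4 ≤ a
  · have h1 : (1:ℚ)/a ≤ 1/4 := by
      apply one_div_le_one_div_of_le (by norm_num); exact_mod_cast ha4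
    have h2 : (1:ℚ)/b ≤ 1/4 := by
      apply one_div_le_one_div_of_le (by norm_num); exact_mod_cast le_trans ha4 hab
    have h3 : (1:ℚ)/c ≤ 1/4 := by
      apply one_div_le_one_div_of_le (by norm_num)
      exact_mod_cast le_trans ha4 (le_trans hab hbc)
    linarith
  · push_neg at ha4
    interval_cases a
    · -- a = 2
      by_cases hb5 : 5 ≤ b
      · have h2 : (1:ℚ)/b ≤ 1/5 := by
          apply one_div_le_one_div_of_le (by norm_num); exact_mod_cast hb5
        have h3 : (1:ℚ)/c ≤ 1/5 := by
          apply one_div_le_one_div_of_le (by norm_num); exact_mod_cast le_trans hb5 hbc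
        linarith
      · push_neg at hb5
        interval_cases b
        · -- b = 2
          exfalso
          have : (0:ℚ) < 1/c := by positivity
          norm_num at h
          linarith
        · -- b = 3
          have hc7 : 7 ≤ c := by
            by_contra h'
            push_neg at h'
            interval_cases c <;> norm_num at h
          have h3 : (1:ℚ)/c ≤ 1/7 := by
            apply one_div_le_one_div_of_le (by norm_num); exact_mod_cast hc7
          push_cast
          linarith
        · -- b = 4
          have hc5 : 5 ≤ c := by
            by_contra h'
            push_neg at h'
            interval_cases c <;> norm_num at h
          have h3 : (1:ℚ)/c ≤ 1/5 := by
            apply one_div_le_one_div_of_le (by norm_num); exact_mod_cast hc5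
          push_cast
          linarith
    · -- a = 3
      by_cases hb4 : 4 ≤ b
      · have h2 : (1:ℚ)/b ≤ 1/4 := by
          apply one_div_le_one_div_of_le (by norm_num); exact_mod_cast hb4
        have h3 : (1:ℚ)/c ≤ 1/4 := by
          apply one_div_le_one_div_of_le (by norm_num); exact_mod_cast le_trans hb4 hbc
        linarith
      · push_neg at hb4
        interval_cases b
        · -- b = 3
          have hc4 : 4 ≤ c := by
            by_contra h'
            push_neg at h'
            interval_cases c <;> norm_num at h
          have h3 : (1:ℚ)/c ≤ 1/4 := by
            apply one_div_le_one_div_of_le (by norm_num); exact_mod_cast hc4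
          push_cast
          linarith

lemma aux_sum (a b c : ℕ) (ha : 2 ≤ a) (hb : 2 ≤ b) (hc : 2 ≤ c)
    (h : (1:ℚ)/a + 1/b + 1/c < 1) : (1:ℚ)/a + 1/b + 1/c ≤ 41/42 := by
  rcases le_total a b with h1 | h1 <;> rcases le_total b c with h2 | h2 <;>
    rcases le_total a c with h3 | h3
  · linarith [aux_sorted a b c ha h1 h2 (by linarith)]
  · linarith [aux_sorted a b c ha h1 h2 (by linarith)]
  · linarith [aux_sorted a c b ha h3 h2 (by linarith)]
  · linarith [aux_sorted c a b hc h3 h1 (by linarith)]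
  · linarith [aux_sorted b a c hb h1 h3 (by linarith)]
  · linarith [aux_sorted b c a hb h2 h3 (by linarith)]
  · linarith [aux_sorted c b a hc h2 h1 (by linarith)]
  · linarith [aux_sorted c b a hc h2 h1 (by linarith)]

theorem triangle_group_lcm_bound
    (k₁ k₂ k₃ : ℕ) (h1 : 2 ≤ k₁) (h2 : 2 ≤ k₂) (h3 : 2 ≤ k₃)
    (K : ℤ) (hK : 1 ≤ K)
    (d : ℕ) (hd : d = Nat.lcm k₁ (Nat.lcm k₂ k₃))
    (hpos : 0 < (d : ℚ) * (1 - 1 / k₁ - 1 / k₂ - 1 / k₃))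
    (hle : (d : ℚ) * (1 - 1 / k₁ - 1 / k₂ - 1 / k₃) ≤ K) :
    (d : ℤ) ≤ 42 * K := by
  have hdpos : 0 < d := by
    subst hd
    exact Nat.lcm_pos (by omega) (Nat.lcm_pos (by omega) (by omega))
  have hd0 : (0:ℚ) < d := by exact_mod_cast hdpos
  have hepos : 0 < (1:ℚ) - 1/k₁ - 1/k₂ - 1/k₃ := by
    by_contra h'
    push_neg at h'
    nlinarith
  have hsum : (1:ℚ)/k₁ + 1/k₂ + 1/k₃ ≤ 41/42 := by
    apply aux_sum k₁ k₂ k₃ h1 h2 h3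
    linarith
  have key : (d:ℚ) ≤ 42 * K := by
    have : (d:ℚ) * (1/42) ≤ (d:ℚ) * (1 - 1/k₁ - 1/k₂ - 1/k₃) := by
      apply mul_le_mul_of_nonneg_left (by linarith) (le_of_lt hd0)
    linarith
  exact_mod_cast key
end

section
/- In the abelian group A presented by generators q₁,…,q_r, z and relations q₁^{k₁}·z = 0, …, q_r^{k_r}·z = 0, q₁+⋯+q_r + (2g−2+r)·z = 0 (written additively), the order of z is exactly e = d·(2g − 2 + Σᵢ(1 − 1/kᵢ)), where d = lcm(k₁,…,k_r), provided e > 0. -/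
theorem order_of_z_in_abelianized_lift
    (g r : ℕ) (hr : 1 ≤ r) (k : Fin r → ℕ) (hk : ∀ i, 2 ≤ k i)
    (d : ℕ) (hd : d = Finset.univ.lcm k)
    (e : ℤ) (he : (e : ℚ) = (d : ℚ) * (2 * g - 2 + ∑ i, (1 - 1 / (k i : ℚ))))
    (hepos : 0 < e)
    (S : Submodule ℤ ((Fin r → ℤ) × ℤ))
    (hS : S = Submodule.span ℤ
      ({((fun _ => 1 : Fin r → ℤ), 2 * (g : ℤ) - 2 + r)} ∪
        Set.range (fun i : Fin r => ((Pi.single i (k i : ℤ) : Fin r → ℤ), (1 : ℤ))))) :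
    ∀ N : ℤ, N • (Submodule.Quotient.mk ((0, 1) : (Fin r → ℤ) × ℤ) : _ ⧸ S) = 0 ↔ e ∣ N := by
  intro N
  have hk0 : ∀ i, k i ≠ 0 := fun i => by have := hk i; omega
  have hkd : ∀ i, k i ∣ d := fun i => hd ▸ Finset.dvd_lcm (Finset.mem_univ i)
  have hsum : ∀ m : ℤ, ∑ i, -((d / k i : ℕ) : ℤ) * m = -(∑ i, ((d / k i : ℕ) : ℤ)) * m := by
    intro m; rw [neg_mul, Finset.sum_mul]; simp
  have hE : e = (d : ℤ) * (2 * (g : ℤ) - 2 + r) - ∑ i, ((d / k i : ℕ) : ℤ) := by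
    have : (e : ℚ) = ((d : ℤ) * (2 * (g : ℤ) - 2 + r) - ∑ i, ((d / k i : ℕ) : ℤ) : ℤ) := by
      rw [he]
      have hdiv : ∀ i, ((d / k i : ℕ) : ℚ) = (d : ℚ) / (k i : ℚ) := fun i =>
        Nat.cast_div (hkd i) (Nat.cast_ne_zero.mpr (hk0 i))
      push_cast
      have hs : ∑ x : Fin r, ((((d : ℤ) / (k x : ℤ) : ℤ)) : ℚ) = (d : ℚ) * ∑ x, 1 / (k x : ℚ) := by
        rw [Finset.mul_sum]
        refine Finset.sum_congr rfl fun x _ => ?_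
        rw [← Int.natCast_div, Int.cast_natCast, mul_one_div]
        exact hdiv x
      rw [Finset.sum_sub_distrib, Finset.sum_const, Finset.card_univ, Fintype.card_fin,
        nsmul_eq_mul, mul_one, hs]
      ring
    exact_mod_cast this
  set v : Option (Fin r) → (Fin r → ℤ) × ℤ := fun o =>
    o.elim ((fun _ => 1 : Fin r → ℤ), 2 * (g : ℤ) - 2 + r)
      (fun i => ((Pi.single i (k i : ℤ) : Fin r → ℤ), (1 : ℤ))) with hv
  have hSet : ({((fun _ => 1 : Fin r → ℤ), 2 * (g : ℤ) - 2 + r)} ∪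
        Set.range (fun i : Fin r => ((Pi.single i (k i : ℤ) : Fin r → ℤ), (1 : ℤ))))
      = Set.range v := by
    ext x
    simp [hv, Option.exists, eq_comm]
  have hmem : ∀ x : (Fin r → ℤ) × ℤ, x ∈ S ↔ ∃ c : Option (Fin r) → ℤ, ∑ o, c o • v o = x := by
    intro x
    rw [hS, hSet]
    exact Submodule.mem_span_range_iff_exists_fun ℤ
  have hquot : N • (Submodule.Quotient.mk ((0, 1) : (Fin r → ℤ) × ℤ) : _ ⧸ S) = 0 ↔
      ((0, N) : (Fin r → ℤ) × ℤ) ∈ S := by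
    rw [← Submodule.Quotient.mk_smul, Submodule.Quotient.mk_eq_zero]
    constructor <;> intro h <;>
      simpa [Prod.smul_def, smul_eq_mul] using h
  rw [hquot, hmem]
  constructor
  · rintro ⟨c, hc⟩
    have hc1 : (∑ o, c o • v o).1 = (0 : Fin r → ℤ) := by rw [hc]
    have hc2 : (∑ o, c o • v o).2 = N := by rw [hc]
    rw [Prod.fst_sum, Fintype.sum_option] at hc1
    rw [Prod.snd_sum, Fintype.sum_option] at hc2
    simp only [hv, Option.elim, Prod.smul_mk, smul_eq_mul, mul_one] at hc2
    have hrel : ∀ j, c none + c (some j) * (k j : ℤ) = 0 := by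
      intro j
      have := congrFun hc1 j
      simpa [hv, Prod.smul_mk, Finset.sum_apply, Pi.single_apply, mul_comm] using this
    have hdvd : (d : ℤ) ∣ c none := by
      rw [Int.natCast_dvd, hd]
      apply Finset.lcm_dvd
      intro i _
      rw [← Int.natCast_dvd]
      exact ⟨-c (some i), by linear_combination hrel i⟩
    obtain ⟨m, hm⟩ := hdvd
    have hdk : ∀ j, ((d / k j : ℕ) : ℤ) * (k j : ℤ) = (d : ℤ) := fun j => by
      exact_mod_cast congrArg (Nat.cast : ℕ → ℤ) (Nat.div_mul_cancel (hkd j))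
    have hcm : ∀ j, c (some j) = -((d / k j : ℕ) : ℤ) * m := by
      intro j
      have : c (some j) * (k j : ℤ) = (-((d / k j : ℕ) : ℤ) * m) * (k j : ℤ) := by
        linear_combination hrel j + m * hdk j - hm
      exact mul_right_cancel₀ (by exact_mod_cast hk0 j) this
    refine ⟨m, ?_⟩
    rw [← hc2, hm, hE, Finset.sum_congr rfl fun i _ => hcm i, hsum]
    ring
  · rintro ⟨m, rfl⟩
    refine ⟨fun o => o.elim ((d : ℤ) * m) (fun i => -((d / k i : ℕ) : ℤ) * m), ?_⟩
    have hdk : ∀ j, ((d / k j : ℕ) : ℤ) * (k j : ℤ) = (d : ℤ) := fun j => by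
      exact_mod_cast congrArg (Nat.cast : ℕ → ℤ) (Nat.div_mul_cancel (hkd j))
    apply Prod.ext
    · rw [Prod.fst_sum, Fintype.sum_option]
      funext j
      simp only [hv, Option.elim, Prod.smul_mk, Pi.add_apply, Finset.sum_apply, Pi.smul_apply,
        smul_eq_mul, Pi.single_apply, mul_ite, mul_zero, Finset.sum_ite_eq,
        Finset.mem_univ, if_true, mul_one, Pi.zero_apply]
      linear_combination -m * hdk j
    · rw [Prod.snd_sum, Fintype.sum_option]
      simp only [hv, Option.elim, Prod.smul_mk, smul_eq_mul, mul_one]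
      rw [hE, hsum]
      ring
end

section
/- With notation as in the presentation of the lifted Fuchsian group: if in the abelian group A (generated by q₁,…,q_r,z with relations kᵢqᵢ + z = 0 for all i and Σqᵢ + (2g−2+r)z = 0) we have N·z = 0, then N = n·d·(2g−2+r − Σᵢ 1/kᵢ) for some integer n, where d = lcm(kᵢ). -/
theorem z_torsion_form_in_abelianized_lift
    (g r : ℕ) (hr : 1 ≤ r) (k : Fin r → ℕ) (hk : ∀ i, 2 ≤ k i)
    (d : ℕ) (hd : d = Finset.univ.lcm k)
    (S : Submodule ℤ ((Fin r → ℤ) × ℤ))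
    (hS : S = Submodule.span ℤ
      ({((fun _ => 1 : Fin r → ℤ), 2 * (g : ℤ) - 2 + r)} ∪
        Set.range (fun i : Fin r => ((Pi.single i (k i : ℤ) : Fin r → ℤ), (1 : ℤ))))) :
    ∀ N : ℤ, N • (Submodule.Quotient.mk ((0, 1) : (Fin r → ℤ) × ℤ) : _ ⧸ S) = 0 →
      ∃ n : ℤ, (N : ℚ) = n * d * (2 * g - 2 + r - ∑ i, 1 / (k i : ℚ)) := by
  intro N hN
  rw [← Submodule.Quotient.mk_smul, Submodule.Quotient.mk_eq_zero, hS,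
    Set.singleton_union, Submodule.mem_span_insert] at hN
  obtain ⟨β, x, hx, heq⟩ := hN
  rw [Submodule.mem_span_range_iff_exists_fun] at hx
  obtain ⟨c, rfl⟩ := hx
  have h1 : ∀ j, β + c j * (k j : ℤ) = 0 := by
    intro j
    have := congrFun (congrArg Prod.fst heq) j
    simpa [Prod.fst_sum, Finset.sum_apply, Pi.single_apply, Finset.sum_ite_eq',
      mul_comm] using this.symm
  have h2 : N = β * (2 * (g : ℤ) - 2 + r) + ∑ i, c i := by
    have := congrArg Prod.snd heq
    simpa [Prod.snd_sum, mul_comm] using this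
  have hdvdk : ∀ i : Fin r, (k i : ℤ) ∣ β := fun i => ⟨-c i, by linarith [h1 i]⟩
  have hdvd : (d : ℤ) ∣ β := by
    rw [hd, Int.natCast_dvd]
    exact Finset.lcm_dvd fun i _ => Int.natCast_dvd.mp (hdvdk i)
  obtain ⟨n, hn⟩ := hdvd
  refine ⟨n, ?_⟩
  have hk0 : ∀ i, (k i : ℚ) ≠ 0 := fun i => by
    have := hk i; positivity
  have hcQ : ∀ i, (c i : ℚ) = -β / (k i : ℚ) := by
    intro i
    rw [eq_div_iff (hk0 i)]
    exact_mod_cast (by linarith [h1 i] : c i * (k i : ℤ) = -β)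
  have hNQ : (N : ℚ) = β * (2 * (g : ℤ) - 2 + r) + ∑ i, (c i : ℚ) := by
    exact_mod_cast congrArg (Int.cast : ℤ → ℚ) h2
  have hβ : (β : ℚ) = n * d := by rw [hn]; push_cast; ring
  rw [hNQ]
  simp only [hcQ, hβ]
  have hsum : ∑ i : Fin r, -((n : ℚ) * d) / (k i : ℚ)
      = -((n : ℚ) * d * ∑ i : Fin r, 1 / (k i : ℚ)) := by
    rw [Finset.mul_sum, ← Finset.sum_neg_distrib]
    exact Finset.sum_congr rfl fun i _ => by field_simp
  rw [hsum]
  push_cast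
  ring
end

section
/- Let Γ̃ be the group presented by generators q₁,…,q_r, h with h central, h²=1, qᵢ^{kᵢ} = h⁻¹ for all i, and q₁⋯q_r = h^{−r}. Write kᵢ = 2^{uᵢ}vᵢ with vᵢ odd, let m = max uᵢ and n = #{i : uᵢ = m} (with n = 0 if all kᵢ odd). If n is odd, then h lies in the commutator subgroup of Γ̃ (i.e. h maps to 1 in the abelianization). -/
namespace LiftedFuchsian

def q {r : ℕ} (i : Fin r) : FreeGroup (Fin (r + 1)) := FreeGroup.of i.castSucc

def h {r : ℕ} : FreeGroup (Fin (r + 1)) := FreeGroup.of (Fin.last r)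

/-- Relations of the lift to SL(2,ℝ) of a genus-zero Fuchsian group of
signature (0; k₁,…,k_r): h central, h² = 1, qᵢ^{kᵢ} = h⁻¹, q₁⋯q_r = h^{-r}. -/
def rels (r : ℕ) (k : Fin r → ℕ) : Set (FreeGroup (Fin (r + 1))) :=
  (Set.range fun i : Fin r => h * q i * h⁻¹ * (q i)⁻¹) ∪ {h ^ 2} ∪
  (Set.range fun i : Fin r => (q i) ^ (k i) * h) ∪
  {(List.ofFn fun i : Fin r => q i).prod * h ^ r}

/-- maximal power of 2 dividing one of the kᵢ -/
def m (r : ℕ) (k : Fin r → ℕ) : ℕ := Finset.univ.sup fun i => (k i).factorization 2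

/-- number of kᵢ divisible by 2^m (set to 0 if all kᵢ are odd) -/
def n (r : ℕ) (k : Fin r → ℕ) : ℕ :=
  if m r k = 0 then 0
  else (Finset.univ.filter fun i => (k i).factorization 2 = m r k).card

end LiftedFuchsian

theorem abelian_key {A : Type*} [CommGroup A] (r : ℕ) (k : Fin r → ℕ)
    (hk : ∀ i, 2 ≤ k i) (M : ℕ) (hMsup : M = Finset.univ.sup fun i => (k i).factorization 2)
    (hM : M ≠ 0)
    (hn : Odd (Finset.univ.filter fun i => (k i).factorization 2 = M).card)
    (H : A) (Q : Fin r → A)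
    (hH2 : H ^ 2 = 1) (hQk : ∀ i, Q i ^ k i * H = 1)
    (hprod : (∏ i, Q i) * H ^ r = 1) : H = 1 := by
  have hkne : ∀ i, k i ≠ 0 := fun i => by have := hk i; omega
  set u : Fin r → ℕ := fun i => (k i).factorization 2 with hu
  set v : Fin r → ℕ := fun i => k i / 2 ^ u i with hv
  have hkv : ∀ i, 2 ^ u i * v i = k i := fun i =>
    Nat.ordProj_mul_ordCompl_eq_self (k i) 2
  have hvodd : ∀ i, ¬ 2 ∣ v i := fun i =>
    Nat.not_dvd_ordCompl Nat.prime_two (hkne i)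
  set V : ℕ := ∏ i, v i with hV
  have hVodd : ¬ 2 ∣ V := by
    intro hd
    obtain ⟨i, _, hi⟩ := (Nat.prime_two.prime.dvd_finset_prod_iff v).mp hd
    exact hvodd i hi
  have hoddd : ∀ d, d ∣ V → Odd d := by
    intro d hd
    rw [Nat.odd_iff]
    rcases Nat.mod_two_eq_zero_or_one d with he | ho
    · exact absurd ((Nat.dvd_of_mod_eq_zero he).trans hd) hVodd
    · exact ho
  have hui : ∀ i, u i ≤ M := fun i => hMsup ▸ Finset.le_sup (Finset.mem_univ i)
  have hvV : ∀ i, v i ∣ V := fun i => Finset.dvd_prod_of_mem v (Finset.mem_univ i)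
  set N : ℕ := 2 ^ M * V with hN
  set c : Fin r → ℕ := fun i => 2 ^ (M - u i) * (V / v i) with hc
  have hkc : ∀ i, k i * c i = N := by
    intro i
    rw [← hkv i, hN, mul_mul_mul_comm, ← pow_add, Nat.add_sub_cancel' (hui i),
      Nat.mul_div_cancel' (hvV i)]
  have hHc : ∀ cc : ℕ, H ^ cc = H ^ (cc % 2) := by
    intro cc
    conv_lhs => rw [← Nat.div_add_mod cc 2]
    rw [pow_add, pow_mul, hH2, one_pow, one_mul]
  have hHinv : H⁻¹ = H := inv_eq_of_mul_eq_one_right (by rw [← sq]; exact hH2)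
  have hQH : ∀ i, Q i ^ k i = H⁻¹ := fun i => eq_inv_of_mul_eq_one_left (hQk i)
  have hQN : ∀ i, Q i ^ N = H ^ c i := by
    intro i
    rw [← hkc i, pow_mul, hQH i, hHinv]
  have h1 : (∏ i, Q i) ^ N * H ^ (r * N) = 1 := by
    have := congrArg (· ^ N) hprod
    simpa [mul_pow, ← pow_mul] using this
  have hNeven : 2 ∣ N := Dvd.dvd.mul_right (dvd_pow_self 2 hM) V
  have hrN : H ^ (r * N) = 1 := by
    obtain ⟨t, ht⟩ := hNeven
    have he : r * (2 * t) = 2 * (r * t) := by ring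
    rw [ht, he, pow_mul, hH2, one_pow]
  have h2 : H ^ (∑ i, c i) = 1 := by
    rw [← Finset.prod_pow_eq_pow_sum]
    calc (∏ i, H ^ c i) = ∏ i, Q i ^ N := by
          exact Finset.prod_congr rfl fun i _ => (hQN i).symm
    _ = (∏ i, Q i) ^ N := by rw [Finset.prod_pow]
    _ = 1 := by rw [hrN, mul_one] at h1; exact h1
  have hciodd : ∀ i, Odd (c i) ↔ u i = M := by
    intro i
    have h2' : Odd (V / v i) := hoddd _ (Nat.div_dvd_of_dvd (hvV i))
    rw [hc]
    rw [Nat.odd_mul]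
    simp only [h2', and_true, ← Nat.not_even_iff_odd, Nat.even_pow, even_two, true_and,
      ne_eq, not_not]
    have := hui i
    omega
  have hsum : Odd (∑ i, c i) := by
    rw [Finset.odd_sum_iff_odd_card_odd]
    have heq : (Finset.univ.filter fun i => Odd (c i)) =
        (Finset.univ.filter fun i => (k i).factorization 2 = M) := by
      apply Finset.filter_congr
      intro i _
      simpa using hciodd i
    rw [heq]
    exact hn
  calc H = H ^ (∑ i, c i) := by rw [hHc, Nat.odd_iff.mp hsum, pow_one]
  _ = 1 := h2

open LiftedFuchsian in
theorem h_in_commutator_of_n_odd (r : ℕ) (k : Fin r → ℕ) (hk : ∀ i, 2 ≤ k i)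
    (hn : Odd (n r k)) :
    PresentedGroup.mk (rels r k) h ∈ commutator (PresentedGroup (rels r k)) := by
  classical
  set R := rels r k with hR
  let φ : FreeGroup (Fin (r + 1)) →* Abelianization (PresentedGroup R) :=
    (Abelianization.of).comp (PresentedGroup.mk R)
  have hrel : ∀ x ∈ R, φ x = 1 := by
    intro x hx
    show Abelianization.of (PresentedGroup.mk R x) = 1
    have : PresentedGroup.mk R x = 1 :=
      (QuotientGroup.eq_one_iff x).mpr (Subgroup.subset_normalClosure hx)
    rw [this, map_one]
  have hH2 : φ h ^ 2 = 1 := by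
    rw [← map_pow]
    exact hrel _ (Set.mem_union_left _ (Set.mem_union_left _ (Set.mem_union_right _ rfl)))
  have hQk : ∀ i, φ (q i) ^ k i * φ h = 1 := by
    intro i
    have := hrel _ (Set.mem_union_left _ (Set.mem_union_right _ ⟨i, rfl⟩))
    simpa [map_mul, map_pow] using this
  have hprod : (∏ i, φ (q i)) * φ h ^ r = 1 := by
    have := hrel _ (Set.mem_union_right _ (rfl : _ ∈ ({(List.ofFn fun i : Fin r => q i).prod * h ^ r} : Set _)))
    simpa [map_mul, map_pow, map_list_prod, List.map_ofFn, List.prod_ofFn, Function.comp]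
      using this
  have hM : m r k ≠ 0 := by
    intro h0
    rw [n, if_pos h0] at hn
    simp at hn
  have hn' : Odd (Finset.univ.filter fun i => (k i).factorization 2 = m r k).card := by
    rwa [n, if_neg hM] at hn
  have hfin : φ h = 1 :=
    abelian_key r k hk (m r k) rfl hM hn' (φ h) (fun i => φ (q i)) hH2 hQk hprod
  exact (QuotientGroup.eq_one_iff _).mp hfin
end

section
/- With the same presentation: if n (the number of kᵢ divisible by the maximal 2-power 2^m among the kᵢ) is even, then h does not lie in the commutator subgroup of Γ̃; specifically, there is a homomorphism φ : Γ̃ → ℂ (unit circle) with φ(h) = −1. -/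
open Finset Real

namespace Circle

lemma exp_sum {ι : Type*} (s : Finset ι) (f : ι → ℝ) :
    exp (∑ i ∈ s, f i) = ∏ i ∈ s, exp (f i) :=
  map_sum expHom f s

lemma exp_pi_mul_intCast_of_even {z : ℤ} (hz : Even z) : exp (π * z) = 1 := by
  obtain ⟨a, rfl⟩ := hz
  rw [exp_eq_one]
  exact ⟨a, by push_cast; ring⟩

end Circle

namespace LiftedFuchsian

section Parity

variable {ι : Type*} [Fintype ι]

lemma even_sum_two_pow_sub {u : ι → ℕ} {M : ℕ} (hu : ∀ i, u i ≤ M)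
    (hn : Even #{i | u i = M}) : Even (∑ i, 2 ^ (M - u i)) := by
  rw [← sum_filter_add_sum_filter_not _ (fun i => u i = M)]
  refine .add ?_ (even_sum _ fun i hi => (Nat.even_pow' ?_).2 even_two)
  · rwa [sum_congr rfl fun i hi => by rw [(mem_filter.1 hi).2, Nat.sub_self, pow_zero],
      sum_const, smul_eq_mul, mul_one]
  · have := hu i
    have := (mem_filter.1 hi).2
    omega

lemma even_two_pow_mul_card_sub_sum {u : ι → ℕ} {M : ℕ} (hu : ∀ i, u i ≤ M)
    (hpar : M = 0 ∨ Even #{i | u i = M}) :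
    Even ((2 ^ M * Fintype.card ι : ℤ) - ∑ i, 2 ^ (M - u i)) := by
  obtain rfl | hM := eq_or_ne M 0
  · simp
  · refine .sub ((Int.even_pow.2 ⟨even_two, hM⟩).mul_right _) ?_
    exact_mod_cast even_sum_two_pow_sub hu (hpar.resolve_left hM)

lemma exists_dyadic_angles [DecidableEq ι] (u : ι → ℕ) (i₀ : ι) (hu : ∀ i, u i ≤ u i₀)
    (hpar : u i₀ = 0 ∨ Even #{i | u i = u i₀}) :
    ∃ θ : ι → ℝ, ∑ i, θ i = Fintype.card ι ∧ ∀ i, ∃ w : ℤ, Odd w ∧ 2 ^ u i * θ i = w := by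
  set M := u i₀
  set D : ℤ := 2 ^ M * Fintype.card ι - ∑ i, 2 ^ (M - u i)
  have hD : Even D := even_two_pow_mul_card_sub_sum hu hpar
  have h2M : (2 : ℝ) ^ M ≠ 0 := by positivity
  have hpow : ∀ i, (2 : ℝ) ^ u i * 2 ^ (M - u i) = 2 ^ M := fun i => by
    rw [← pow_add, Nat.add_sub_cancel' (hu i)]
  refine ⟨fun i => ((2 ^ (M - u i) + if i = i₀ then D else 0 : ℤ) : ℝ) / 2 ^ M, ?_, fun i => ?_⟩
  · rw [← sum_div, div_eq_iff h2M, ← Int.cast_sum, sum_add_distrib, sum_ite_eq']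
    simp only [mem_univ, if_true, add_sub_cancel, D]
    push_cast
    ring
  · by_cases hi : i = i₀
    · refine ⟨1 + D, hD.one_add, ?_⟩
      subst hi
      field_simp
      push_cast [D]
      rw [mul_add, hpow]
      ring
    · refine ⟨1, odd_one, ?_⟩
      simp only [hi, if_false, add_zero]
      field_simp
      push_cast
      rw [hpow, mul_one]

end Parity

lemma odd_ordCompl_two {a : ℕ} (ha : a ≠ 0) : Odd (ordCompl[2] a) :=
  Nat.odd_iff.2 (Nat.two_dvd_ne_zero.1 (Nat.not_dvd_ordCompl Nat.prime_two ha))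

lemma exists_angles {r : ℕ} {k : Fin r → ℕ} (hk : ∀ i, k i ≠ 0) (hn : Even (n r k)) :
    ∃ θ : Fin r → ℝ, ∑ i, θ i = r ∧ ∀ i, ∃ w : ℤ, Odd w ∧ k i * θ i = w := by
  obtain _ | r := r
  · exact ⟨0, by simp, fun i => i.elim0⟩
  set u : Fin (r + 1) → ℕ := fun i => (k i).factorization 2
  obtain ⟨i₀, -, hi₀⟩ := exists_mem_eq_sup univ univ_nonempty u
  have hu : ∀ i, u i ≤ u i₀ := fun i => hi₀ ▸ le_sup (mem_univ i)
  have hpar : u i₀ = 0 ∨ Even #{i | u i = u i₀} := by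
    have hm : m (r + 1) k = u i₀ := hi₀
    rw [← hm]
    by_cases h0 : m (r + 1) k = 0
    · exact .inl h0
    · exact .inr (by rwa [n, if_neg h0] at hn)
  obtain ⟨θ, hsum, hodd⟩ := exists_dyadic_angles u i₀ hu hpar
  refine ⟨θ, by simpa using hsum, fun i => ?_⟩
  obtain ⟨w, hw, hθ⟩ := hodd i
  set v := ordCompl[2] (k i)
  have hkv : (k i : ℝ) = 2 ^ u i * v := by
    exact_mod_cast (Nat.ordProj_mul_ordCompl_eq_self (k i) 2).symm
  refine ⟨v * w, ((Int.odd_coe_nat v).2 (odd_ordCompl_two (hk i))).mul hw, ?_⟩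
  rw [hkv, mul_comm _ (v : ℝ), mul_assoc, hθ]
  push_cast
  rfl

lemma exists_hom_circle {r : ℕ} {k : Fin r → ℕ} (θ : Fin r → ℝ) (hsum : ∑ i, θ i = r)
    (hodd : ∀ i, ∃ w : ℤ, Odd w ∧ k i * θ i = w) :
    ∃ ψ : PresentedGroup (rels r k) →* Circle,
      ψ (PresentedGroup.mk (rels r k) h) = Circle.exp π := by
  set f : Fin (r + 1) → Circle := Fin.snoc (fun i => Circle.exp (π * θ i)) (Circle.exp π)
  have hfq : ∀ i, FreeGroup.lift f (q i) = Circle.exp (π * θ i) := by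
    simp [f, q]
  have hfh : FreeGroup.lift f h = Circle.exp π := by
    simp [f, h]
  have hrels : ∀ g ∈ rels r k, FreeGroup.lift f g = 1 := by
    rintro g (((⟨i, rfl⟩ | rfl) | ⟨i, rfl⟩) | rfl)
    · simp
    · simp [hfh, ← Circle.exp_natCast_mul]
    · obtain ⟨w, hw, hkθ⟩ := hodd i
      rw [map_mul, map_pow, hfq, hfh, ← Circle.exp_natCast_mul, ← Circle.exp_add]
      convert Circle.exp_pi_mul_intCast_of_even hw.add_one using 2
      push_cast
      linear_combination π * hkθ
    · rw [map_mul, map_pow, map_list_prod, List.map_ofFn, List.prod_ofFn, hfh]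
      simp only [Function.comp_apply, hfq, ← Circle.exp_sum, ← Circle.exp_natCast_mul,
        ← Circle.exp_add]
      convert Circle.exp_pi_mul_intCast_of_even (z := r + r) ⟨r, rfl⟩ using 2
      rw [← mul_sum, hsum]
      push_cast
      ring
  exact ⟨PresentedGroup.toGroup hrels,
    (PresentedGroup.toGroup.of hrels (x := Fin.last r)).trans (by simp [f])⟩

end LiftedFuchsian

open LiftedFuchsian in
theorem h_not_in_commutator_of_n_even (r : ℕ) (k : Fin r → ℕ) (hk : ∀ i, 2 ≤ k i)
    (hn : Even (n r k)) :
    (∃ φ : PresentedGroup (rels r k) →* ℂ, φ (PresentedGroup.mk (rels r k) h) = -1) ∧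
    PresentedGroup.mk (rels r k) h ∉ commutator (PresentedGroup (rels r k)) := by
  obtain ⟨θ, hsum, hodd⟩ := exists_angles (fun i => (Nat.zero_lt_of_lt (hk i)).ne') hn
  obtain ⟨ψ, hψ⟩ := exists_hom_circle θ hsum hodd
  refine ⟨⟨Circle.coeHom.comp ψ, ?_⟩, fun hmem => Circle.exp_pi_ne_one ?_⟩
  · exact (congrArg Circle.coeHom hψ).trans ((Circle.coe_exp π).trans Complex.exp_pi_mul_I)
  · rw [← hψ]
    exact Abelianization.commutator_subset_ker ψ hmem
end
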